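/- arXiv:1705.04797 — 4 statements merged into one kernel-verified Lean document; each statement's English description precedes it below -/
import Mathlib

section
/- Let n be an integer with n ≥ 2, let k ≥ 2, r₀ > 0, ε > 0 be real numbers, and let C be a real number with C ≥ (n-1)·(k-1)·(r₀+ε)^{k-1}/ε. Then there is no function h : ℝ → ℝ that is differentiable on [ε, ∞) and satisfies both 0 ≤ h(t) < (n-1)/t and h'(t) ≤ -C/(r₀+t)^k for all t ≥ ε. -/
/-- Scalar core of the main theorem: for `n ≥ 2`, `k ≥ 2`, `r₀ > 0`, `ε > 0` and
`C ≥ (n-1)·(k-1)·(r₀+ε)^(k-1)/ε`, there is no function `h` differentiable on `[ε, ∞)`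
with `0 ≤ h t < (n-1)/t` and `h'(t) ≤ -C/(r₀+t)^k` for all `t ≥ ε`. -/
theorem no_trace_hessian_ray (n : ℤ) (hn : 2 ≤ n) (k r₀ ε C : ℝ)
    (hk : 2 ≤ k) (hr₀ : 0 < r₀) (hε : 0 < ε)
    (hC : ((n : ℝ) - 1) * (k - 1) * (r₀ + ε) ^ (k - 1) / ε ≤ C) :
    ¬ ∃ h : ℝ → ℝ, DifferentiableOn ℝ h (Set.Ici ε) ∧
      (∀ t, ε ≤ t → 0 ≤ h t ∧ h t < ((n : ℝ) - 1) / t) ∧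
      (∀ t, ε ≤ t → derivWithin h (Set.Ici ε) t ≤ -C / (r₀ + t) ^ k) := by
  rintro ⟨h, hdiff, hbound, hderiv⟩
  have hn1 : (1:ℝ) ≤ (n:ℝ) - 1 := by
    have : (2:ℝ) ≤ (n:ℝ) := by exact_mod_cast hn
    linarith
  have hk1 : (0:ℝ) < k - 1 := by linarith
  have hCpos : 0 < C := lt_of_lt_of_le (by positivity) hC
  set ψ : ℝ → ℝ := fun t => C / (k - 1) * (r₀ + t) ^ (1 - k) with hψdef
  have hψderiv : ∀ t, ε ≤ t → HasDerivAt ψ (-C / (r₀ + t) ^ k) t := by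
    intro t ht
    have hpos : 0 < r₀ + t := by linarith
    have h1 : HasDerivAt (fun t : ℝ => r₀ + t) 1 t := by
      simpa using (hasDerivAt_id t).const_add r₀
    have h2 : HasDerivAt (fun x : ℝ => x ^ (1 - k)) ((1 - k) * (r₀ + t) ^ (1 - k - 1)) (r₀ + t) :=
      Real.hasDerivAt_rpow_const (Or.inl hpos.ne')
    have h4 := (h2.comp t h1).const_mul (C / (k - 1))
    refine h4.congr_deriv ?_
    have he : (1 - k - 1 : ℝ) = -k := by ring
    rw [he, Real.rpow_neg hpos.le]
    have hXpos : (0:ℝ) < (r₀ + t) ^ k := Real.rpow_pos_of_pos hpos k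
    field_simp
    ring
  -- ψ at ε is at least (n-1)/ε
  have hP : (0:ℝ) < (r₀ + ε) ^ (k - 1) := Real.rpow_pos_of_pos (by linarith) _
  have hψε : ((n:ℝ) - 1) / ε ≤ ψ ε := by
    have h1k : (1 - k : ℝ) = -(k - 1) := by ring
    have : ψ ε = C / ((k - 1) * (r₀ + ε) ^ (k - 1)) := by
      rw [hψdef]
      simp only
      rw [h1k, Real.rpow_neg (by linarith : (0:ℝ) ≤ r₀ + ε)]
      field_simp
    rw [this, div_le_div_iff₀ hε (by positivity)]
    have hC' : ((n : ℝ) - 1) * (k - 1) * (r₀ + ε) ^ (k - 1) ≤ C * ε :=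
      (div_le_iff₀ hε).mp hC
    nlinarith
  have hhε := hbound ε le_rfl
  have hδ : 0 < ψ ε - h ε := by
    have := hhε.2
    linarith
  set δ := ψ ε - h ε with hδdef
  set T := max ε (1 + C / ((k - 1) * δ)) with hT
  have hTε : ε ≤ T := le_max_left _ _
  have hT1 : 1 + C / ((k - 1) * δ) ≤ T := le_max_right _ _
  have hTpos : 0 < r₀ + T := by linarith
  have hquot : 0 < C / ((k - 1) * δ) := by positivity
  have hT1' : (1:ℝ) ≤ r₀ + T := by linarith
  -- ψ T < δ
  have hψT : ψ T < δ := by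
    have hmono : (r₀ + T) ^ (1:ℝ) ≤ (r₀ + T) ^ (k - 1) :=
      Real.rpow_le_rpow_of_exponent_le hT1' (by linarith)
    rw [Real.rpow_one] at hmono
    have hinv : (r₀ + T) ^ (1 - k) ≤ (r₀ + T)⁻¹ := by
      have h1k : (1 - k : ℝ) = -(k - 1) := by ring
      rw [h1k, Real.rpow_neg hTpos.le]
      exact inv_anti₀ hTpos hmono
    have hstep : ψ T ≤ C / (k - 1) * (r₀ + T)⁻¹ := by
      rw [hψdef]
      exact mul_le_mul_of_nonneg_left hinv (by positivity)
    have hfin : C / (k - 1) * (r₀ + T)⁻¹ < δ := by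
      have h0 : C / ((k - 1) * δ) < r₀ + T := by linarith
      rw [div_lt_iff₀ (by positivity)] at h0
      have h2 : C / (k - 1) < δ * (r₀ + T) := by
        rw [div_lt_iff₀ hk1]; nlinarith
      calc C / (k - 1) * (r₀ + T)⁻¹ < δ * (r₀ + T) * (r₀ + T)⁻¹ :=
            mul_lt_mul_of_pos_right h2 (by positivity)
        _ = δ := by field_simp
    linarith
  -- F = h - ψ is antitone on [ε, ∞)
  have hψdiff : DifferentiableOn ℝ ψ (Set.Ici ε) := fun t ht =>
    ((hψderiv t ht).differentiableAt).differentiableWithinAt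
  have hF : AntitoneOn (fun t => h t - ψ t) (Set.Ici ε) := by
    apply antitoneOn_of_deriv_nonpos (convex_Ici ε)
    · exact (hdiff.sub hψdiff).continuousOn
    · intro x hx
      rw [interior_Ici] at hx
      have hx' : ε ≤ x := le_of_lt hx
      have hmem : Set.Ici ε ∈ nhds x := Ici_mem_nhds hx
      have hhx : DifferentiableAt ℝ h x := (hdiff x hx').differentiableAt hmem
      exact (hhx.sub (hψderiv x hx').differentiableAt).differentiableWithinAt
    · intro x hx
      rw [interior_Ici] at hx
      have hx' : ε ≤ x := le_of_lt hx
      have hmem : Set.Ici ε ∈ nhds x := Ici_mem_nhds hx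
      have hhx : DifferentiableAt ℝ h x := (hdiff x hx').differentiableAt hmem
      have hd : HasDerivAt (fun t => h t - ψ t) (deriv h x - (-C / (r₀ + x) ^ k)) x :=
        hhx.hasDerivAt.sub (hψderiv x hx')
      rw [hd.deriv]
      have : derivWithin h (Set.Ici ε) x = deriv h x := derivWithin_of_mem_nhds hmem
      have hle := hderiv x hx'
      rw [this] at hle
      linarith
  have hkey := hF (Set.mem_Ici.mpr le_rfl) (Set.mem_Ici.mpr hTε) hTε
  have hhT := (hbound T hTε).1
  simp only at hkey
  linarith
end

section
/- Let n be an integer with n ≥ 2, let k > 2 and r₀ > 0 be real numbers, and set C = (n-1)·(k-1)^k/(k-2)^{k-2}·r₀^{k-2}. Then there is no function h : ℝ → ℝ that is differentiable on (0, ∞) and satisfies both 0 ≤ h(t) < (n-1)/t and h'(t) ≤ -C/(r₀+t)^k for all t > 0. -/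
/-- Scalar core of the `k > 2` case of the main theorem, with the explicit optimal
constant `C = (n-1)·(k-1)^k/(k-2)^(k-2)·r₀^(k-2)`: there is no function `h`
differentiable on `(0, ∞)` with `0 ≤ h t < (n-1)/t` and `h'(t) ≤ -C/(r₀+t)^k`
for all `t > 0`. -/
theorem no_trace_hessian_ray_k_gt_two (n : ℤ) (hn : 2 ≤ n) (k r₀ : ℝ)
    (hk : 2 < k) (hr₀ : 0 < r₀) :
    ¬ ∃ h : ℝ → ℝ, DifferentiableOn ℝ h (Set.Ioi 0) ∧
      (∀ t : ℝ, 0 < t → 0 ≤ h t ∧ h t < ((n : ℝ) - 1) / t) ∧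
      (∀ t : ℝ, 0 < t →
        deriv h t ≤ -(((n : ℝ) - 1) * (k - 1) ^ k / (k - 2) ^ (k - 2) * r₀ ^ (k - 2))
          / (r₀ + t) ^ k) := by
  rintro ⟨h, hdiff, hbound, hderiv⟩
  set C : ℝ := ((n : ℝ) - 1) * (k - 1) ^ k / (k - 2) ^ (k - 2) * r₀ ^ (k - 2) with hCdef
  have hk1 : (0:ℝ) < k - 1 := by linarith
  have hk2 : (0:ℝ) < k - 2 := by linarith
  have hn1 : (0:ℝ) < (n:ℝ) - 1 := by
    have : (2:ℝ) ≤ (n:ℝ) := by exact_mod_cast hn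
    linarith
  have hCpos : 0 < C := by positivity
  set a : ℝ := r₀ / (k - 2) with hadef
  have ha : 0 < a := div_pos hr₀ hk2
  -- derivative of the comparison function
  have hF : ∀ t : ℝ, 0 < t →
      HasDerivAt (fun s : ℝ => C / (k-1) * (r₀ + s) ^ (1-k)) (-(C / (r₀ + t) ^ k)) t := by
    intro t ht
    have hpos : 0 < r₀ + t := by linarith
    have h1 : HasDerivAt (fun s : ℝ => r₀ + s) 1 t := (hasDerivAt_id t).const_add r₀
    have h2 : HasDerivAt (fun s : ℝ => (r₀ + s) ^ (1-k))
        ((1-k) * (r₀ + t) ^ (1-k-1) * 1) t :=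
      (Real.hasDerivAt_rpow_const (p := 1-k) (Or.inl hpos.ne')).comp t h1
    have h3 := h2.const_mul (C / (k-1))
    refine h3.congr_deriv ?_
    rw [show (1:ℝ)-k-1 = -k by ring, Real.rpow_neg hpos.le]
    have hrk : (0:ℝ) < (r₀ + t) ^ k := Real.rpow_pos_of_pos hpos k
    field_simp
    ring
  have hsub : Set.Ici a ⊆ Set.Ioi (0:ℝ) := fun x hx => lt_of_lt_of_le ha hx
  -- antitonicity of h - F on [a, ∞)
  have anti : AntitoneOn (fun t => h t - C / (k-1) * (r₀ + t) ^ (1-k)) (Set.Ici a) := by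
    apply antitoneOn_of_deriv_nonpos (convex_Ici a)
    · exact (hdiff.continuousOn.mono hsub).sub
        (fun x hx => ((hF x (hsub hx)).continuousAt.continuousWithinAt))
    · intro x hx
      rw [interior_Ici] at hx
      have hx0 : (0:ℝ) < x := lt_trans ha hx
      exact ((hdiff.differentiableAt (isOpen_Ioi.mem_nhds hx0)).sub
        (hF x hx0).differentiableAt).differentiableWithinAt
    · intro x hx
      rw [interior_Ici] at hx
      have hx0 : (0:ℝ) < x := lt_trans ha hx
      have hdh : DifferentiableAt ℝ h x := hdiff.differentiableAt (isOpen_Ioi.mem_nhds hx0)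
      rw [deriv_fun_sub hdh (hF x hx0).differentiableAt, (hF x hx0).deriv]
      have := hderiv x hx0
      have hrk : (0:ℝ) < (r₀ + x) ^ k := Real.rpow_pos_of_pos (by linarith) k
      rw [neg_div] at this
      linarith
  -- value of F at a
  have hra : r₀ + a = r₀ * (k-1) / (k-2) := by
    rw [hadef]; field_simp; ring
  have hFa : C / (k-1) * (r₀ + a) ^ (1-k) = ((n:ℝ) - 1) / a := by
    have hrapos : (0:ℝ) < r₀ + a := by linarith
    have hL : 0 < C / (k-1) * (r₀ + a) ^ (1-k) :=
      mul_pos (div_pos hCpos hk1) (Real.rpow_pos_of_pos hrapos _)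
    have hR : 0 < ((n:ℝ) - 1) / a := div_pos hn1 ha
    apply Real.log_injOn_pos (Set.mem_Ioi.mpr hL) (Set.mem_Ioi.mpr hR)
    rw [hra, hCdef, hadef]
    have l1 : Real.log ((k-1) ^ k) = k * Real.log (k-1) := Real.log_rpow hk1 _
    have l2 : Real.log ((k-2) ^ (k-2)) = (k-2) * Real.log (k-2) := Real.log_rpow hk2 _
    have l3 : Real.log (r₀ ^ (k-2)) = (k-2) * Real.log r₀ := Real.log_rpow hr₀ _
    have l4 : Real.log ((r₀ * (k-1) / (k-2)) ^ (1-k))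
        = (1-k) * (Real.log r₀ + Real.log (k-1) - Real.log (k-2)) := by
      rw [Real.log_rpow (by positivity), Real.log_div (by positivity) (by positivity),
          Real.log_mul hr₀.ne' hk1.ne']
    rw [Real.log_mul (by positivity) (by positivity),
        Real.log_div (by positivity) (by positivity),
        Real.log_mul (by positivity) (by positivity),
        Real.log_div (by positivity) (by positivity),
        Real.log_mul (by positivity) (by positivity),
        l1, l2, l3, l4,
        Real.log_div (by positivity) (by positivity),
        Real.log_div (by positivity) (by positivity)]
    ring
  -- F(b) → 0 as b → ∞
  have hlim : Filter.Tendsto (fun b : ℝ => C / (k-1) * (r₀ + b) ^ (1-k))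
      Filter.atTop (nhds 0) := by
    have h1 : Filter.Tendsto (fun b : ℝ => r₀ + b) Filter.atTop Filter.atTop :=
      Filter.tendsto_atTop_add_const_left _ _ Filter.tendsto_id
    have h2 := (tendsto_rpow_neg_atTop hk1).comp h1
    have heq : (fun b : ℝ => C / (k-1) * (r₀ + b) ^ (1-k))
        = fun b : ℝ => C / (k-1) * ((fun x : ℝ => x ^ (-(k-1))) ∘ (fun b : ℝ => r₀ + b)) b := by
      funext b
      simp only [Function.comp]
      norm_num
    rw [heq]
    simpa using h2.const_mul (C / (k-1))
  -- conclude
  have key : ((n:ℝ) - 1) / a ≤ h a := by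
    rw [← hFa]
    have ev : ∀ᶠ b in Filter.atTop,
        C / (k-1) * (r₀ + a) ^ (1-k) - C / (k-1) * (r₀ + b) ^ (1-k) ≤ h a := by
      filter_upwards [Filter.eventually_ge_atTop a] with b hb
      have h1 := anti Set.self_mem_Ici hb hb
      have h2 := (hbound b (lt_of_lt_of_le ha hb)).1
      simp only at h1
      linarith
    have ht : Filter.Tendsto
        (fun b : ℝ => C / (k-1) * (r₀ + a) ^ (1-k) - C / (k-1) * (r₀ + b) ^ (1-k))
        Filter.atTop (nhds (C / (k-1) * (r₀ + a) ^ (1-k))) := by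
      simpa using (tendsto_const_nhds.sub hlim)
    exact le_of_tendsto ht ev
  exact absurd (hbound a ha).2 (not_lt.mpr key)
end

section
/- Let n be an integer with n ≥ 2, let r₀ > 0 and ε > 0 be real numbers, and set C = (n-1)·(1 + r₀/ε). Then there is no function h : ℝ → ℝ that is differentiable on [ε, ∞) and satisfies both 0 ≤ h(t) < (n-1)/t and h'(t) ≤ -C/(r₀+t)² for all t ≥ ε. -/
/-- Scalar core of the `k = 2` case of the main theorem, with the constant
`C = (n-1)·(1 + r₀/ε)`: there is no function `h` differentiable on `[ε, ∞)` with
`0 ≤ h t < (n-1)/t` and `h'(t) ≤ -C/(r₀+t)²` for all `t ≥ ε`. -/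
theorem no_trace_hessian_ray_k_eq_two (n : ℤ) (hn : 2 ≤ n) (r₀ ε : ℝ)
    (hr₀ : 0 < r₀) (hε : 0 < ε) :
    ¬ ∃ h : ℝ → ℝ, DifferentiableOn ℝ h (Set.Ici ε) ∧
      (∀ t, ε ≤ t → 0 ≤ h t ∧ h t < ((n : ℝ) - 1) / t) ∧
      (∀ t, ε ≤ t →
        derivWithin h (Set.Ici ε) t ≤ -(((n : ℝ) - 1) * (1 + r₀ / ε)) / (r₀ + t) ^ 2) := by
  rintro ⟨h, hdiff, hbound, hderiv⟩
  set C : ℝ := ((n : ℝ) - 1) * (1 + r₀ / ε) with hC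
  have hn1 : (1 : ℝ) ≤ (n : ℝ) - 1 := by
    have : (2 : ℝ) ≤ (n : ℝ) := by exact_mod_cast hn
    linarith
  have hCpos : 0 < C := by
    have : 0 < 1 + r₀ / ε := by positivity
    nlinarith
  have hpos : ∀ t ∈ Set.Ici ε, 0 < r₀ + t := fun t ht => by
    simp only [Set.mem_Ici] at ht; linarith
  set g : ℝ → ℝ := fun t => h t - C / (r₀ + t) with hg
  -- g is antitone on Ici ε
  have hφdiff : ∀ x ∈ Set.Ici ε, HasDerivAt (fun t => C / (r₀ + t)) (-C / (r₀ + x) ^ 2) x := by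
    intro x hx
    have hne : r₀ + x ≠ 0 := (hpos x hx).ne'
    have h1 : HasDerivAt (fun t => r₀ + t) 1 x := (hasDerivAt_id x).const_add r₀
    have h2 := (h1.inv hne).const_mul C
    simp only [div_eq_mul_inv]
    exact h2.congr_deriv (by ring)
  have hganti : AntitoneOn g (Set.Ici ε) := by
    apply antitoneOn_of_deriv_nonpos (convex_Ici ε)
    · exact (hdiff.sub (fun x hx => ((hφdiff x hx).differentiableAt).differentiableWithinAt)).continuousOn
    · intro x hx
      rw [interior_Ici] at hx
      have hx' : x ∈ Set.Ici ε := Set.mem_Ici.2 (le_of_lt hx)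
      have hmem : Set.Ici ε ∈ nhds x := Ici_mem_nhds hx
      exact ((hdiff x hx').differentiableAt hmem).sub
        ((hφdiff x hx').differentiableAt) |>.differentiableWithinAt
    · intro x hx
      rw [interior_Ici] at hx
      have hx' : x ∈ Set.Ici ε := Set.mem_Ici.2 (le_of_lt hx)
      have hmem : Set.Ici ε ∈ nhds x := Ici_mem_nhds hx
      have hhx : DifferentiableAt ℝ h x := (hdiff x hx').differentiableAt hmem
      have hgd : HasDerivAt g (deriv h x - (-C / (r₀ + x) ^ 2)) x :=
        hhx.hasDerivAt.sub (hφdiff x hx')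
      rw [hgd.deriv]
      have hdw : derivWithin h (Set.Ici ε) x = deriv h x := derivWithin_of_mem_nhds hmem
      have := hderiv x (le_of_lt hx)
      rw [hdw] at this
      linarith
  -- key computation: C / (r₀ + ε) = (n-1)/ε
  have hkey : C / (r₀ + ε) = ((n : ℝ) - 1) / ε := by
    rw [hC]; field_simp; ring
  have hδ : 0 < ((n : ℝ) - 1) / ε - h ε := by
    have := (hbound ε le_rfl).2; linarith
  set δ := ((n : ℝ) - 1) / ε - h ε with hδdef
  set T := max ε (C / δ) with hT
  have hTε : ε ≤ T := le_max_left _ _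
  have hCT : C / (r₀ + T) < δ := by
    have hTpos : 0 < r₀ + T := hpos T hTε
    rw [div_lt_iff₀ hTpos]
    have h1 : C / δ ≤ T := le_max_right _ _
    have h2 : C ≤ δ * T := by
      rw [div_le_iff₀ hδ] at h1; linarith
    nlinarith
  have hmono := hganti (Set.mem_Ici.2 le_rfl) (Set.mem_Ici.2 hTε) hTε
  simp only [hg] at hmono
  have hhT := (hbound T hTε).1
  rw [hkey] at hmono
  have hTpos : 0 < r₀ + T := hpos T hTε
  linarith
end

section
/- Let n be an integer with n ≥ 2, let k ≥ 2, r₀ > 0, ε > 0, C > 0 be real numbers, let g : ℝ → ℝ be continuous and nonnegative on [ε, ∞), and let h : ℝ → ℝ be differentiable on [ε, ∞) with 0 ≤ h(t) < (n-1)/t and h'(t) + g(t) + C/(r₀+t)^k ≤ 0 for all t ≥ ε. Then for all t > ε: ∫_ε^t g(s) ds ≤ (n-1)/ε − (C/(k-1))·(1/(r₀+ε)^{k-1} − 1/(r₀+t)^{k-1}), and consequently the improper integral ∫_ε^∞ g(s) ds is at most (n-1)/ε − C/((k-1)·(r₀+ε)^{k-1}). -/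
open MeasureTheory

open Set Filter in
private lemma psi_integral (k r₀ ε C : ℝ) (hk : 2 ≤ k) (hr₀ : 0 < r₀) (hε : 0 < ε)
    {t : ℝ} (hεt : ε < t) :
    ∫ s in ε..t, C / (r₀ + s) ^ k =
      (C / (k - 1)) * (1 / (r₀ + ε) ^ (k - 1) - 1 / (r₀ + t) ^ (k - 1)) := by
  have hpe : (0:ℝ) < r₀ + ε := by linarith
  have hpt : (0:ℝ) < r₀ + t := by linarith
  have h1 : ∀ s ∈ Set.uIcc ε t, C / (r₀ + s) ^ k = C * (r₀ + s) ^ (-k) := by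
    intro s hs
    rw [Set.uIcc_of_le hεt.le] at hs
    rw [Real.rpow_neg (by linarith [hs.1])]
    ring
  rw [intervalIntegral.integral_congr h1]
  rw [intervalIntegral.integral_const_mul]
  have h2 : ∫ s in ε..t, (r₀ + s) ^ (-k) = ∫ x in (r₀+ε)..(r₀+t), x ^ (-k) := by
    rw [← intervalIntegral.integral_comp_add_left (fun x => x ^ (-k)) r₀]
  rw [h2, integral_rpow]
  · have e1 : (r₀ + t) ^ (-k + 1) = 1 / (r₀ + t) ^ (k - 1) := by
      rw [show -k + 1 = -(k-1) by ring, Real.rpow_neg hpt.le, one_div]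
    have e2 : (r₀ + ε) ^ (-k + 1) = 1 / (r₀ + ε) ^ (k - 1) := by
      rw [show -k + 1 = -(k-1) by ring, Real.rpow_neg hpe.le, one_div]
    rw [e1, e2]
    have ha : (r₀ + ε) ^ (k - 1) ≠ 0 := ne_of_gt (Real.rpow_pos_of_pos hpe _)
    have hb : (r₀ + t) ^ (k - 1) ≠ 0 := ne_of_gt (Real.rpow_pos_of_pos hpt _)
    have hk1 : k - 1 ≠ 0 := by intro hc; rw [sub_eq_zero] at hc; linarith
    have key : ∀ a b : ℝ, a ≠ 0 → b ≠ 0 →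
        C * ((1/b - 1/a)/(-k+1)) = C/(k-1)*(1/a - 1/b) := by
      intro a b ha' hb'
      have hk2 : -k + 1 ≠ 0 := by intro hc; apply hk1; linarith
      field_simp
      ring
    exact key _ _ ha hb
  · right
    constructor
    · intro hc; linarith
    · rw [Set.uIcc_of_le (by linarith)]
      rintro ⟨h1', h2'⟩; linarith

/-- The key integral estimate: if `g` is continuous and nonnegative on `[ε, ∞)` and
`h` is differentiable on `[ε, ∞)` with `0 ≤ h t < (n-1)/t` and
`h'(t) + g(t) + C/(r₀+t)^k ≤ 0` for all `t ≥ ε`, then for all `t > ε`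
`∫_ε^t g ≤ (n-1)/ε − (C/(k-1))·(1/(r₀+ε)^(k-1) − 1/(r₀+t)^(k-1))`, and the improper
integral `∫_ε^∞ g` is at most `(n-1)/ε − C/((k-1)·(r₀+ε)^(k-1))`. -/
theorem integral_estimate (n : ℤ) (hn : 2 ≤ n) (k r₀ ε C : ℝ)
    (hk : 2 ≤ k) (hr₀ : 0 < r₀) (hε : 0 < ε) (hCpos : 0 < C)
    (g h : ℝ → ℝ)
    (hgcont : ContinuousOn g (Set.Ici ε))
    (hgnonneg : ∀ t, ε ≤ t → 0 ≤ g t)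
    (hdiff : DifferentiableOn ℝ h (Set.Ici ε))
    (hbound : ∀ t, ε ≤ t → 0 ≤ h t ∧ h t < ((n : ℝ) - 1) / t)
    (hderiv : ∀ t, ε ≤ t →
      derivWithin h (Set.Ici ε) t + g t + C / (r₀ + t) ^ k ≤ 0) :
    (∀ t, ε < t → ∫ s in ε..t, g s ≤
        ((n : ℝ) - 1) / ε -
          (C / (k - 1)) * (1 / (r₀ + ε) ^ (k - 1) - 1 / (r₀ + t) ^ (k - 1))) ∧
      ∫ s in Set.Ioi ε, g s ≤
        ((n : ℝ) - 1) / ε - C / ((k - 1) * (r₀ + ε) ^ (k - 1)) := by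
  have hψcont : ContinuousOn (fun s => C / (r₀ + s) ^ k) (Set.Ici ε) := by
    apply continuousOn_const.div
    · exact ((continuous_const.add continuous_id).continuousOn).rpow_const
        (fun x hx => Or.inl (ne_of_gt (by have : ε ≤ x := hx; show (0:ℝ) < r₀ + x; linarith)))
    · intro x hx
      have hx' : ε ≤ x := hx
      exact ne_of_gt (Real.rpow_pos_of_pos (by linarith) _)
  -- part 1
  have part1 : ∀ t, ε < t → ∫ s in ε..t, g s ≤
      ((n : ℝ) - 1) / ε -
        (C / (k - 1)) * (1 / (r₀ + ε) ^ (k - 1) - 1 / (r₀ + t) ^ (k - 1)) := by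
    intro t hεt
    have hsub : Set.Icc ε t ⊆ Set.Ici ε := Set.Icc_subset_Ici_self
    have hφint : IntegrableOn (fun s => g s + C / (r₀ + s) ^ k) (Set.Icc ε t) :=
      ((hgcont.add hψcont).mono hsub).integrableOn_Icc
    have hgint : IntervalIntegrable g volume ε t := by
      apply ContinuousOn.intervalIntegrable
      rw [Set.uIcc_of_le hεt.le]; exact hgcont.mono hsub
    have hψint : IntervalIntegrable (fun s => C / (r₀ + s) ^ k) volume ε t := by
      apply ContinuousOn.intervalIntegrable
      rw [Set.uIcc_of_le hεt.le]; exact hψcont.mono hsub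
    have key : h t - h ε ≤ ∫ s in ε..t, -(g s + C / (r₀ + s) ^ k) := by
      apply intervalIntegral.sub_le_integral_of_hasDeriv_right_of_le hεt.le
        (hdiff.continuousOn.mono hsub)
        (g' := fun x => derivWithin h (Set.Ici ε) x)
      · intro x hx
        exact ((hdiff x (le_of_lt hx.1)).hasDerivWithinAt).mono
          (Set.Ioi_subset_Ici (le_of_lt hx.1))
      · exact hφint.neg
      · intro x hx
        have := hderiv x (le_of_lt hx.1)
        linarith
    rw [intervalIntegral.integral_neg] at key
    have hsum : ∫ s in ε..t, (g s + C / (r₀ + s) ^ k) =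
        (∫ s in ε..t, g s) + ∫ s in ε..t, C / (r₀ + s) ^ k :=
      intervalIntegral.integral_add hgint hψint
    have hψval := psi_integral k r₀ ε C hk hr₀ hε hεt
    have hb1 := (hbound ε le_rfl).2
    have hb2 := (hbound t hεt.le).1
    have : (∫ s in ε..t, g s) + ∫ s in ε..t, C / (r₀ + s) ^ k ≤ h ε - h t := by
      rw [← hsum]; linarith
    rw [hψval] at this
    linarith
  refine ⟨part1, ?_⟩
  -- part 2
  have hpe : (0:ℝ) < r₀ + ε := by linarith
  have hA : (0:ℝ) < (r₀ + ε) ^ (k - 1) := Real.rpow_pos_of_pos hpe _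
  -- monotone bound: each interval integral ≤ (n-1)/ε
  have hmono : ∀ t, ε < t → ∫ s in ε..t, g s ≤ ((n:ℝ) - 1) / ε := by
    intro t hεt
    have hpt : (0:ℝ) < r₀ + t := by linarith
    have hBle : 1 / (r₀ + t) ^ (k - 1) ≤ 1 / (r₀ + ε) ^ (k - 1) := by
      apply one_div_le_one_div_of_le hA
      exact Real.rpow_le_rpow hpe.le (by linarith) (by linarith)
    have := part1 t hεt
    have hnn : 0 ≤ (C / (k - 1)) * (1 / (r₀ + ε) ^ (k - 1) - 1 / (r₀ + t) ^ (k - 1)) := by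
      apply mul_nonneg (div_nonneg hCpos.le (by linarith)) (by linarith)
    linarith
  -- integrability on Ioi ε
  have hint : IntegrableOn g (Set.Ioi ε) := by
    apply MeasureTheory.integrableOn_Ioi_of_intervalIntegral_norm_bounded
      (((n:ℝ) - 1) / ε) ε (b := fun i : ℕ => ε + 1 + i) (l := Filter.atTop)
    · intro i
      apply IntegrableOn.mono_set _ Set.Ioc_subset_Icc_self
      exact (hgcont.mono (Set.Icc_subset_Ici_self)).integrableOn_Icc
    · exact Filter.tendsto_atTop_add_const_left _ _ tendsto_natCast_atTop_atTop
    · apply Filter.Eventually.of_forall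
      intro i
      have hi0 : (0:ℝ) ≤ i := Nat.cast_nonneg i
      have hεi : ε < ε + 1 + i := by linarith
      have hcongr : ∫ x in ε..(ε + 1 + i), ‖g x‖ = ∫ x in ε..(ε + 1 + i), g x := by
        apply intervalIntegral.integral_congr
        intro x hx
        rw [Set.uIcc_of_le hεi.le] at hx
        exact Real.norm_of_nonneg (hgnonneg x hx.1)
      rw [hcongr]
      exact hmono _ hεi
  -- limit of interval integrals
  have htend : Filter.Tendsto (fun t : ℝ => ∫ s in ε..t, g s) Filter.atTop
      (nhds (∫ s in Set.Ioi ε, g s)) :=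
    MeasureTheory.intervalIntegral_tendsto_integral_Ioi ε hint Filter.tendsto_id
  -- limit of the RHS
  have hk1 : (0:ℝ) < k - 1 := by linarith
  have hBtend : Filter.Tendsto (fun t : ℝ => 1 / (r₀ + t) ^ (k - 1)) Filter.atTop (nhds 0) := by
    simp only [one_div]
    apply Filter.Tendsto.inv_tendsto_atTop
    exact (tendsto_rpow_atTop hk1).comp (Filter.tendsto_atTop_add_const_left _ _ Filter.tendsto_id)
  have hRtend : Filter.Tendsto (fun t : ℝ => ((n : ℝ) - 1) / ε -
      (C / (k - 1)) * (1 / (r₀ + ε) ^ (k - 1) - 1 / (r₀ + t) ^ (k - 1))) Filter.atTop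
      (nhds (((n : ℝ) - 1) / ε - C / ((k - 1) * (r₀ + ε) ^ (k - 1)))) := by
    have : ((n : ℝ) - 1) / ε - C / ((k - 1) * (r₀ + ε) ^ (k - 1)) =
        ((n : ℝ) - 1) / ε - (C / (k - 1)) * (1 / (r₀ + ε) ^ (k - 1) - 0) := by
      rw [sub_zero, div_mul_eq_mul_div, mul_one_div, div_div, mul_comm]
    rw [this]
    exact tendsto_const_nhds.sub (tendsto_const_nhds.mul (tendsto_const_nhds.sub hBtend))
  exact le_of_tendsto_of_tendsto htend hRtend
    (Filter.eventually_atTop.mpr ⟨ε + 1, fun t ht => part1 t (by linarith)⟩)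
end
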